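/- arXiv:2506.14966 — 5 statements merged into one kernel-verified Lean document; each statement's English description precedes it below -/
import Mathlib

section
/- Let f_c(r) = -r^m + 2cα·r^k - 1 with m > k ≥ 1 natural numbers and α > 0. There exists c₀ > 0 such that for all 0 < c < c₀ the function f_c has no positive real zeros, and for all c > c₀ the function f_c has exactly two positive real zeros. -/
/-!
For `r > 0`, dividing by `r ^ k` shows `f_c r = 0 ↔ g r = 2 c α` with
`g r = r ^ (m - k) + (r ^ k)⁻¹`. Since `g' r = ((m - k) r ^ m - k) / r ^ (k + 1)`, the function `g` is
strictly decreasing on `(0, ρ]` and strictly increasing on `[ρ, ∞)`, where `(m - k) ρ ^ m = k`, and it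
tends to `∞` at both ends of `(0, ∞)`. By the intermediate value theorem it takes every value
above `g ρ` exactly twice and none below, so `c₀ = g ρ / (2 α)`.
-/

open Set Filter Topology

section Valley

variable {g : ℝ → ℝ} {a ρ t : ℝ}

theorem le_of_strictAntiOn_of_strictMonoOn (hanti : StrictAntiOn g (Ioc a ρ))
    (hmono : StrictMonoOn g (Ici ρ)) (haρ : a < ρ) {r : ℝ} (hr : a < r) : g ρ ≤ g r := by
  rcases le_or_gt r ρ with h | h
  · exact hanti.antitoneOn ⟨hr, h⟩ ⟨haρ, le_rfl⟩ h
  · exact hmono.monotoneOn self_mem_Ici h.le h.le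

theorem exists_mem_Ioo_eq_of_tendsto_nhdsGT (hcont : ContinuousOn g (Ioi a))
    (hleft : Tendsto g (𝓝[>] a) atTop) (haρ : a < ρ) (ht : g ρ < t) :
    ∃ r ∈ Ioo a ρ, g r = t := by
  obtain ⟨b, hgb, hb⟩ := ((hleft.eventually_gt_atTop t).and (Ioo_mem_nhdsGT haρ)).exists
  obtain ⟨r, hr, rfl⟩ : ∃ r ∈ Icc b ρ, g r = t :=
    intermediate_value_Icc' hb.2.le (hcont.mono ((Icc_subset_Ioi_iff hb.2.le).2 hb.1)) ⟨ht.le, hgb.le⟩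
  exact ⟨r, ⟨hb.1.trans_le hr.1, hr.2.lt_of_ne (by rintro rfl; exact ht.ne rfl)⟩, rfl⟩

theorem exists_mem_Ioi_eq_of_tendsto_atTop (hcont : ContinuousOn g (Ici ρ))
    (hright : Tendsto g atTop atTop) (ht : g ρ < t) :
    ∃ r ∈ Ioi ρ, g r = t := by
  obtain ⟨b, hgb, hb⟩ := ((hright.eventually_gt_atTop t).and (eventually_ge_atTop ρ)).exists
  obtain ⟨r, hr, rfl⟩ : ∃ r ∈ Icc ρ b, g r = t :=
    intermediate_value_Icc hb (hcont.mono Icc_subset_Ici_self) ⟨ht.le, hgb.le⟩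
  exact ⟨r, hr.1.lt_of_ne (by rintro rfl; exact ht.ne rfl), rfl⟩

theorem ncard_setOf_eq_of_valley (hcont : ContinuousOn g (Ioi a))
    (hanti : StrictAntiOn g (Ioc a ρ)) (hmono : StrictMonoOn g (Ici ρ))
    (hleft : Tendsto g (𝓝[>] a) atTop) (hright : Tendsto g atTop atTop)
    (haρ : a < ρ) (ht : g ρ < t) :
    {r | a < r ∧ g r = t}.ncard = 2 := by
  obtain ⟨r₁, hr₁, hgr₁⟩ := exists_mem_Ioo_eq_of_tendsto_nhdsGT hcont hleft haρ ht
  obtain ⟨r₂, hr₂, hgr₂⟩ :=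
    exists_mem_Ioi_eq_of_tendsto_atTop (hcont.mono (Ici_subset_Ioi.2 haρ)) hright ht
  have hset : {r | a < r ∧ g r = t} = {r₁, r₂} := by
    ext r
    simp only [mem_ofPred_eq, mem_insert_iff, mem_singleton_iff]
    constructor
    · rintro ⟨hr, rfl⟩
      rcases le_or_gt r ρ with h | h
      · exact .inl (hanti.injOn ⟨hr, h⟩ ⟨hr₁.1, hr₁.2.le⟩ hgr₁.symm)
      · exact .inr (hmono.injOn h.le (mem_Ici.2 hr₂.le) hgr₂.symm)
    · rintro (rfl | rfl)
      exacts [⟨hr₁.1, hgr₁⟩, ⟨haρ.trans hr₂, hgr₂⟩]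
  rw [hset, ncard_pair (hr₁.2.trans hr₂).ne]

end Valley

section PowAddInvPow

variable {p k : ℕ} {r ρ : ℝ}

theorem hasDerivAt_pow_add_inv_pow (p k : ℕ) (hr : r ≠ 0) :
    HasDerivAt (fun x : ℝ => x ^ p + (x ^ k)⁻¹) ((p * r ^ (p + k) - k) / r ^ (k + 1)) r := by
  refine ((hasDerivAt_pow p r).add ((hasDerivAt_pow k r).inv (pow_ne_zero k hr))).congr_deriv ?_
  rcases p with _ | p <;> rcases k with _ | k <;> simp <;> field_simp <;> ring

theorem continuousOn_pow_add_inv_pow (p k : ℕ) :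
    ContinuousOn (fun x : ℝ => x ^ p + (x ^ k)⁻¹) (Ioi 0) :=
  (continuousOn_pow p).add <| (continuousOn_pow k).inv₀ fun _ hx => pow_ne_zero k (ne_of_gt hx)

theorem strictAntiOn_pow_add_inv_pow (hp : 0 < p) (hρ : p * ρ ^ (p + k) = k) :
    StrictAntiOn (fun x : ℝ => x ^ p + (x ^ k)⁻¹) (Ioc 0 ρ) := by
  refine strictAntiOn_of_deriv_neg (convex_Ioc 0 ρ)
    ((continuousOn_pow_add_inv_pow p k).mono Ioc_subset_Ioi_self) fun r hr => ?_
  rw [interior_Ioc] at hr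
  rw [(hasDerivAt_pow_add_inv_pow p k hr.1.ne').deriv]
  refine div_neg_of_neg_of_pos ?_ (pow_pos hr.1 _)
  have := pow_lt_pow_left₀ hr.2 hr.1.le (by omega : p + k ≠ 0)
  have : (p : ℝ) * r ^ (p + k) < p * ρ ^ (p + k) := by gcongr
  linarith

theorem strictMonoOn_pow_add_inv_pow (hp : 0 < p) (hρ₀ : 0 < ρ) (hρ : p * ρ ^ (p + k) = k) :
    StrictMonoOn (fun x : ℝ => x ^ p + (x ^ k)⁻¹) (Ici ρ) := by
  refine strictMonoOn_of_deriv_pos (convex_Ici ρ)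
    ((continuousOn_pow_add_inv_pow p k).mono (Ici_subset_Ioi.2 hρ₀)) fun r hr => ?_
  rw [interior_Ici] at hr
  have hr₀ : 0 < r := hρ₀.trans hr
  rw [(hasDerivAt_pow_add_inv_pow p k hr₀.ne').deriv]
  refine div_pos ?_ (pow_pos hr₀ _)
  have := pow_lt_pow_left₀ hr hρ₀.le (by omega : p + k ≠ 0)
  have : (p : ℝ) * ρ ^ (p + k) < p * r ^ (p + k) := by gcongr
  linarith

theorem tendsto_pow_add_inv_pow_atTop (hp : p ≠ 0) :
    Tendsto (fun x : ℝ => x ^ p + (x ^ k)⁻¹) atTop atTop :=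
  tendsto_atTop_add_right_of_le' _ 0 (tendsto_pow_atTop hp) <|
    (eventually_gt_atTop 0).mono fun _ hx => by positivity

theorem tendsto_pow_add_inv_pow_nhdsGT_zero (hk : k ≠ 0) :
    Tendsto (fun x : ℝ => x ^ p + (x ^ k)⁻¹) (𝓝[>] 0) atTop := by
  refine tendsto_atTop_add_left_of_le' _ 0
    (eventually_nhdsWithin_of_forall fun _ hx => pow_nonneg (le_of_lt hx) p) ?_
  refine Tendsto.inv_tendsto_nhdsGT_zero (tendsto_nhdsWithin_of_tendsto_nhds_of_eventually_within _ ?_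
    (eventually_nhdsWithin_of_forall fun _ hx => mem_Ioi.2 (pow_pos hx k)))
  simpa [zero_pow hk] using ((continuous_pow k).tendsto (0 : ℝ)).mono_left nhdsWithin_le_nhds

theorem exists_levelSets_pow_add_inv_pow (hp : p ≠ 0) (hk : k ≠ 0) :
    ∃ T > 0, (∀ t < T, {r : ℝ | 0 < r ∧ r ^ p + (r ^ k)⁻¹ = t} = ∅) ∧
      ∀ t > T, {r : ℝ | 0 < r ∧ r ^ p + (r ^ k)⁻¹ = t}.ncard = 2 := by
  set ρ : ℝ := ((k : ℝ) / p) ^ ((p + k : ℕ) : ℝ)⁻¹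
  have hρ₀ : 0 < ρ := by positivity
  have hρ : p * ρ ^ (p + k) = k := by
    rw [Real.rpow_inv_natCast_pow (by positivity) (by omega)]
    field_simp
  have hanti := strictAntiOn_pow_add_inv_pow (Nat.pos_of_ne_zero hp) hρ
  have hmono := strictMonoOn_pow_add_inv_pow (Nat.pos_of_ne_zero hp) hρ₀ hρ
  refine ⟨ρ ^ p + (ρ ^ k)⁻¹, by positivity, fun t ht => ?_, fun t ht => ?_⟩
  · refine eq_empty_of_forall_notMem fun r ⟨hr, hrt⟩ => ht.not_ge ?_
    exact hrt ▸ le_of_strictAntiOn_of_strictMonoOn hanti hmono hρ₀ hr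
  · exact ncard_setOf_eq_of_valley (continuousOn_pow_add_inv_pow p k) hanti hmono
      (tendsto_pow_add_inv_pow_nhdsGT_zero hk) (tendsto_pow_add_inv_pow_atTop hp) hρ₀ ht

end PowAddInvPow

theorem neg_pow_add_mul_pow_sub_one_eq_zero_iff {m k : ℕ} (hkm : k ≤ m) {r : ℝ} (hr : 0 < r)
    (b : ℝ) : -r ^ m + b * r ^ k - 1 = 0 ↔ r ^ (m - k) + (r ^ k)⁻¹ = b := by
  rw [← pow_sub_mul_pow r hkm]
  have : r ^ k ≠ 0 := by positivity
  field_simp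
  constructor <;> intro h <;> linarith

theorem zero_count_transition_pos_k (m k : ℕ) (hk : 1 ≤ k) (hmk : k < m) (α : ℝ) (hα : 0 < α) :
    ∃ c₀ : ℝ, 0 < c₀ ∧
      (∀ c : ℝ, 0 < c → c < c₀ →
        {r : ℝ | 0 < r ∧ -r ^ m + 2 * c * α * r ^ k - 1 = 0} = ∅) ∧
      (∀ c : ℝ, c₀ < c →
        {r : ℝ | 0 < r ∧ -r ^ m + 2 * c * α * r ^ k - 1 = 0}.ncard = 2) := by
  have hsets (c : ℝ) : {r : ℝ | 0 < r ∧ -r ^ m + 2 * c * α * r ^ k - 1 = 0} =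
      {r : ℝ | 0 < r ∧ r ^ (m - k) + (r ^ k)⁻¹ = 2 * α * c} := by
    ext r
    exact and_congr_right fun hr => by
      rw [neg_pow_add_mul_pow_sub_one_eq_zero_iff hmk.le hr, mul_right_comm]
  obtain ⟨T, hT, hbelow, habove⟩ := exists_levelSets_pow_add_inv_pow (p := m - k) (k := k)
    (by omega) (by omega)
  refine ⟨T / (2 * α), by positivity, fun c _ hc => ?_, fun c hc => ?_⟩
  · rw [hsets]
    exact hbelow _ ((lt_div_iff₀' (by positivity)).1 hc)
  · rw [hsets]
    exact habove _ ((div_lt_iff₀' (by positivity)).1 hc)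
end

section
/- Let f_c(r) = r^m + 2cα·r^{-n} - 1 for r > 0, where m, n ∈ ℕ with m > n ≥ 1 and α > 0. There exists c₀ > 0 such that for all 0 < c < c₀ the function f_c has exactly two positive real zeros, and for all c > c₀ the function f_c has no positive real zeros. -/
/-!
For `r > 0`, multiplying `f_c(r) = 0` by `r ^ n` turns it into `r ^ n - r ^ (m + n) = 2 c α`.
The left-hand side vanishes at `0` and `1`, increases strictly up to its critical point `s`,
where `(m + n) s ^ m = n`, and decreases strictly beyond it. Hence every level strictly between
`0` and the maximum is attained exactly twice on `(0, ∞)` and no level above the maximum is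
attained at all; `c₀` is that maximum divided by `2 α`.
-/

open Set

theorem apply_le_of_monotoneOn_of_antitoneOn {α δ : Type*} [LinearOrder α] [Preorder δ]
    {h : α → δ} {a s : α} (hmono : MonotoneOn h (Icc a s))
    (hanti : AntitoneOn h (Ici s)) {r : α} (hr : a ≤ r) : h r ≤ h s := by
  rcases le_total r s with hrs | hrs
  · exact hmono ⟨hr, hrs⟩ ⟨hr.trans hrs, le_rfl⟩ hrs
  · exact hanti self_mem_Ici hrs hrs

theorem ncard_setOf_eq_two_of_strictMonoOn_of_strictAntiOn {α δ : Type*}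
    [ConditionallyCompleteLinearOrder α] [TopologicalSpace α] [OrderTopology α] [DenselyOrdered α]
    [LinearOrder δ] [TopologicalSpace δ] [OrderClosedTopology δ] {h : α → δ} {a s : α}
    (hcont : ContinuousOn h (Ici a))
    (hmono : StrictMonoOn h (Icc a s)) (hanti : StrictAntiOn h (Ici s)) (has : a ≤ s)
    {b : α} {T : δ} (hsb : s ≤ b) (ha : h a < T) (hs : T < h s) (hb : h b < T) :
    {r | a < r ∧ h r = T}.ncard = 2 := by
  obtain ⟨x, hx, hxT⟩ := intermediate_value_Ioo has (hcont.mono Icc_subset_Ici_self) ⟨ha, hs⟩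
  obtain ⟨y, hy, hyT⟩ := intermediate_value_Ioo' hsb
    (hcont.mono (Icc_subset_Ici_iff hsb |>.2 has)) ⟨hb, hs⟩
  have hxy : {r | a < r ∧ h r = T} = {x, y} := by
    ext r
    constructor
    · rintro ⟨har, hrT⟩
      rcases le_total r s with hrs | hrs
      · exact .inl <| hmono.injOn ⟨har.le, hrs⟩ ⟨hx.1.le, hx.2.le⟩ (hrT.trans hxT.symm)
      · exact .inr <| hanti.injOn hrs hy.1.le (hrT.trans hyT.symm)
    · rintro (rfl | rfl)
      exacts [⟨hx.1, hxT⟩, ⟨has.trans_lt hy.1, hyT⟩]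
  rw [hxy, ncard_pair (hx.2.trans hy.1).ne]

def powDiff (m n : ℕ) (r : ℝ) : ℝ := r ^ n - r ^ (m + n)

section powDiff

variable {m n : ℕ}

theorem powDiff_zero (hn : n ≠ 0) : powDiff m n 0 = 0 := by
  rw [powDiff, zero_pow hn, zero_pow (by omega), sub_zero]

theorem powDiff_one : powDiff m n 1 = 0 := by
  rw [powDiff, one_pow, one_pow, sub_self]

theorem continuous_powDiff : Continuous (powDiff m n) := by
  unfold powDiff; fun_prop

theorem hasDerivAt_powDiff (hn : 1 ≤ n) (r : ℝ) :
    HasDerivAt (powDiff m n) (r ^ (n - 1) * (n - (m + n) * r ^ m)) r := by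
  refine ((hasDerivAt_pow n r).sub (hasDerivAt_pow (m + n) r)).congr_deriv ?_
  rw [show m + n - 1 = m + (n - 1) by omega, pow_add]
  push_cast
  ring

theorem strictMonoOn_powDiff (hn : 1 ≤ n) (hm : m ≠ 0) {s : ℝ} (hs : (m + n) * s ^ m = n) :
    StrictMonoOn (powDiff m n) (Icc 0 s) := by
  refine strictMonoOn_of_hasDerivWithinAt_pos (convex_Icc 0 s) continuous_powDiff.continuousOn
    (fun r _ => (hasDerivAt_powDiff hn r).hasDerivWithinAt) fun r hr => ?_
  rw [interior_Icc] at hr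
  have hrs : r ^ m < s ^ m := pow_lt_pow_left₀ hr.2 hr.1.le hm
  have hmn : (0 : ℝ) < m + n := by positivity
  exact mul_pos (pow_pos hr.1 _) (by nlinarith)

theorem strictAntiOn_powDiff (hn : 1 ≤ n) (hm : m ≠ 0) {s : ℝ} (hs0 : 0 ≤ s)
    (hs : (m + n) * s ^ m = n) : StrictAntiOn (powDiff m n) (Ici s) := by
  refine strictAntiOn_of_hasDerivWithinAt_neg (convex_Ici s) continuous_powDiff.continuousOn
    (fun r _ => (hasDerivAt_powDiff hn r).hasDerivWithinAt) fun r hr => ?_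
  rw [interior_Ici] at hr
  have hrs : s ^ m < r ^ m := pow_lt_pow_left₀ hr hs0 hm
  have hmn : (0 : ℝ) < m + n := by positivity
  exact mul_neg_of_pos_of_neg (pow_pos (hs0.trans_lt hr) _) (by nlinarith)

theorem exists_pos_lt_one_mul_pow_eq (hn : 1 ≤ n) (hm : m ≠ 0) :
    ∃ s : ℝ, 0 < s ∧ s < 1 ∧ (m + n) * s ^ m = n := by
  have hx0 : (0 : ℝ) < n / (m + n) := by positivity
  have hx1 : (n : ℝ) / (m + n) < 1 := by
    rw [div_lt_one (by positivity)]
    exact_mod_cast Nat.lt_add_of_pos_left (Nat.pos_of_ne_zero hm)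
  refine ⟨(n / (m + n) : ℝ) ^ (m⁻¹ : ℝ), by positivity,
    Real.rpow_lt_one hx0.le hx1 (by positivity), ?_⟩
  rw [Real.rpow_inv_natCast_pow hx0.le hm]
  field_simp

theorem add_mul_zpow_neg_sub_one_eq_zero_iff {r : ℝ} (hr : 0 < r) (T : ℝ) :
    r ^ m + T * r ^ (-(n : ℤ)) - 1 = 0 ↔ powDiff m n r = T := by
  have hrn : r ^ n ≠ 0 := pow_ne_zero _ hr.ne'
  rw [zpow_neg, zpow_natCast, powDiff, pow_add]
  constructor <;> intro hT
  · field_simp at hT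
    linear_combination -hT
  · field_simp
    linear_combination -hT

end powDiff

theorem zero_count_transition_neg_k (m n : ℕ) (hn : 1 ≤ n) (hmn : n < m) (α : ℝ) (hα : 0 < α) :
    ∃ c₀ : ℝ, 0 < c₀ ∧
      (∀ c : ℝ, 0 < c → c < c₀ →
        {r : ℝ | 0 < r ∧ r ^ m + 2 * c * α * r ^ (-(n : ℤ)) - 1 = 0}.ncard = 2) ∧
      (∀ c : ℝ, c₀ < c →
        {r : ℝ | 0 < r ∧ r ^ m + 2 * c * α * r ^ (-(n : ℤ)) - 1 = 0} = ∅) := by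
  have hm : m ≠ 0 := by omega
  have hzero : powDiff m n 0 = 0 := powDiff_zero (by omega)
  obtain ⟨s, hs0, hs1, hs⟩ := exists_pos_lt_one_mul_pow_eq hn hm
  have hmono := strictMonoOn_powDiff hn hm hs
  have hanti := strictAntiOn_powDiff hn hm hs0.le hs
  have hmax : 0 < powDiff m n s := hzero ▸ hmono ⟨le_rfl, hs0.le⟩ ⟨hs0.le, le_rfl⟩ hs0
  have hset (c : ℝ) : {r : ℝ | 0 < r ∧ r ^ m + 2 * c * α * r ^ (-(n : ℤ)) - 1 = 0} =
      {r | 0 < r ∧ powDiff m n r = 2 * c * α} := by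
    ext r
    exact and_congr_right fun hr => add_mul_zpow_neg_sub_one_eq_zero_iff hr _
  refine ⟨powDiff m n s / (2 * α), by positivity, fun c hc hcc => ?_, fun c hcc => ?_⟩
  · rw [lt_div_iff₀ (by positivity)] at hcc
    rw [hset]
    exact ncard_setOf_eq_two_of_strictMonoOn_of_strictAntiOn continuous_powDiff.continuousOn
      hmono hanti hs0.le hs1.le (by rw [hzero]; positivity) (by linarith)
      (by rw [powDiff_one]; positivity)
  · rw [div_lt_iff₀ (by positivity)] at hcc
    rw [hset, eq_empty_iff_forall_notMem]
    rintro r ⟨hr, hrT⟩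
    have := apply_le_of_monotoneOn_of_antitoneOn hmono.monotoneOn hanti.antitoneOn hr.le
    linarith
end

section
/- Let ω be a primitive q-th root of unity in ℂ (q ≥ 1). Then the number of ℓ ∈ {0, 1, ..., q-1} such that the real part of ω^ℓ is positive equals 2·⌊(q-1)/4⌋ + 1. -/
/-! The powers of any primitive `q`-th root of unity enumerate all `q`-th roots of unity, so we may
take `ω = exp (2πi / q)`. Then `Re ω ^ j = cos (2πj / q)`, which for `0 ≤ j < q` is positive exactly
when `4j < q` or `3q < 4j`, and these `j` are counted directly. -/

open Finset Real

theorem Real.cos_pi_div_two_mul_pos_iff {t : ℝ} (h0 : 0 ≤ t) (h4 : t < 4) :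
    0 < cos (π / 2 * t) ↔ t < 1 ∨ 3 < t := by
  have hπ := pi_pos
  constructor
  · intro hcos
    by_contra! ht
    have := cos_nonpos_of_pi_div_two_le_of_le (x := π / 2 * t) (by nlinarith) (by nlinarith)
    linarith
  · rintro (ht | ht)
    · exact cos_pos_of_mem_Ioo ⟨by nlinarith, by nlinarith⟩
    · rw [← cos_sub_two_pi]
      exact cos_pos_of_mem_Ioo ⟨by nlinarith, by nlinarith⟩

theorem Complex.re_exp_two_pi_I_div_pow (q j : ℕ) :
    (exp (2 * π * I / q) ^ j).re = Real.cos (π / 2 * (4 * j / q)) := by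
  rw [← exp_nat_mul]
  have : (j : ℂ) * (2 * π * I / q) = ((π / 2 * (4 * j / q) : ℝ) : ℂ) * I := by
    push_cast; ring
  rw [this, exp_ofReal_mul_I_re]

theorem IsPrimitiveRoot.image_range_pow_eq_nthRootsFinset {R : Type*} [CommRing R] [IsDomain R]
    [DecidableEq R] {ω : R} {q : ℕ} (hω : IsPrimitiveRoot ω q) :
    (range q).image (ω ^ ·) = Polynomial.nthRootsFinset q (1 : R) := by
  rcases q.eq_zero_or_pos with rfl | hq
  · simp
  refine eq_of_subset_of_card_le (fun z hz => ?_) ?_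
  · obtain ⟨ℓ, -, rfl⟩ := mem_image.1 hz
    rw [Polynomial.mem_nthRootsFinset hq, ← pow_mul, mul_comm, pow_mul, hω.pow_eq_one, one_pow]
  · rw [hω.card_nthRootsFinset, card_image_of_injOn hω.injOn_pow, card_range]

theorem IsPrimitiveRoot.card_filter_range_pow_eq {R : Type*} [CommRing R] [IsDomain R]
    {ω ζ : R} {q : ℕ} (hω : IsPrimitiveRoot ω q) (hζ : IsPrimitiveRoot ζ q) (p : R → Prop)
    [DecidablePred p] :
    #{ℓ ∈ range q | p (ω ^ ℓ)} = #{ℓ ∈ range q | p (ζ ^ ℓ)} := by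
  classical
  have card_eq_of_primitive : ∀ {η : R}, IsPrimitiveRoot η q →
      #{ℓ ∈ range q | p (η ^ ℓ)} = #{z ∈ Polynomial.nthRootsFinset q (1 : R) | p z} := by
    intro η hη
    rw [← hη.image_range_pow_eq_nthRootsFinset, filter_image,
      card_image_of_injOn (hη.injOn_pow.mono (filter_subset _ _))]
  rw [card_eq_of_primitive hω, card_eq_of_primitive hζ]

theorem Nat.card_filter_range_four_mul_lt_or_lt {q : ℕ} (hq : 1 ≤ q) :
    #{j ∈ range q | 4 * j < q ∨ 3 * q < 4 * j} = 2 * ((q - 1) / 4) + 1 := by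
  have hsplit : {j ∈ range q | 4 * j < q ∨ 3 * q < 4 * j} =
      range ((q + 3) / 4) ∪ Ico (3 * q / 4 + 1) q := by
    ext j; simp only [mem_filter, mem_range, mem_union, mem_Ico]; omega
  have hdisj : Disjoint (range ((q + 3) / 4)) (Ico (3 * q / 4 + 1) q) := by
    simp only [disjoint_left, mem_range, mem_Ico]; omega
  rw [hsplit, card_union_of_disjoint hdisj, card_range, Nat.card_Ico]
  obtain ⟨m, r, hr, rfl⟩ : ∃ m r, r < 4 ∧ q = 4 * m + r :=
    ⟨q / 4, q % 4, q.mod_lt (by norm_num), by omega⟩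
  interval_cases r <;> omega

theorem count_pos_re_roots_of_unity (q : ℕ) (hq : 1 ≤ q) (ω : ℂ) (hω : IsPrimitiveRoot ω q) :
    ((Finset.range q).filter fun ℓ => 0 < (ω ^ ℓ).re).card = 2 * ((q - 1) / 4) + 1 := by
  have hq0 : (0 : ℝ) < q := by exact_mod_cast hq
  rw [hω.card_filter_range_pow_eq (Complex.isPrimitiveRoot_exp q (by omega)) (0 < ·.re),
    ← Nat.card_filter_range_four_mul_lt_or_lt hq]
  refine congrArg card (filter_congr fun j hj => ?_)
  have hj : (j : ℝ) < q := by exact_mod_cast mem_range.1 hj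
  rw [Complex.re_exp_two_pi_I_div_pow,
    cos_pi_div_two_mul_pos_iff (by positivity) (by rw [div_lt_iff₀ hq0]; linarith),
    div_lt_one hq0, lt_div_iff₀ hq0]
  norm_cast
end

section
/- Let m ≡ 1 (mod 4), write m = 4d + 1, and let ω be a primitive m-th root of unity. Then exactly 2d + 1 of the elements ω^j for j ∈ {0, ..., m-1} have positive real part, and exactly 2d have nonpositive real part. -/
/-!
The powers `ω ^ j`, `j < m`, of any primitive `m`-th root of unity run exactly once through all
`m`-th roots of unity, so the count does not depend on `ω` and we may take
`ω = exp (2πi / m)`. Then `Re (ω ^ j) = cos (2πj / m)`, which is positive exactly when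
`4j < m` or `4j > 3m`; for `m = 4d + 1` these are the `2d + 1` indices `j ≤ d` and `j ≥ 3d + 1`.
-/

open Finset Polynomial

lemma IsPrimitiveRoot.image_pow_range {R : Type*} [CommRing R] [IsDomain R] [DecidableEq R]
    {m : ℕ} {ω : R} (hω : IsPrimitiveRoot ω m) :
    (range m).image (ω ^ ·) = nthRootsFinset m (1 : R) := by
  rcases m.eq_zero_or_pos with rfl | hm
  · simp
  refine eq_of_subset_of_card_le (fun z hz => ?_) ?_
  · obtain ⟨j, -, rfl⟩ := mem_image.1 hz
    rw [Polynomial.mem_nthRootsFinset hm, ← pow_mul, mul_comm, pow_mul, hω.pow_eq_one, one_pow]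
  · rw [hω.card_nthRootsFinset, card_image_of_injOn hω.injOn_pow, card_range]

lemma IsPrimitiveRoot.card_filter_range_pow {R : Type*} [CommRing R] [IsDomain R]
    {m : ℕ} {ω : R} (hω : IsPrimitiveRoot ω m) (P : R → Prop) [DecidablePred P] :
    #{j ∈ range m | P (ω ^ j)} = #{z ∈ nthRootsFinset m (1 : R) | P z} := by
  classical
  rw [← hω.image_pow_range, filter_image,
    card_image_of_injOn (hω.injOn_pow.mono fun j hj => by simp_all)]

lemma Complex.re_exp_two_pi_I_div_pow_s17 (m j : ℕ) :
    (Complex.exp (2 * Real.pi * Complex.I / m) ^ j).re = Real.cos (2 * Real.pi * j / m) := by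
  rw [← Complex.exp_nat_mul, ← Complex.exp_ofReal_mul_I_re]
  push_cast
  ring_nf

lemma Real.cos_two_pi_mul_div_pos_of_four_mul_lt {m j : ℕ} (h : 4 * j < m) :
    0 < Real.cos (2 * Real.pi * j / m) := by
  have hm : (0 : ℝ) < m := by exact_mod_cast (show 0 < m by omega)
  have h' : (4 * j : ℝ) < m := by exact_mod_cast h
  apply Real.cos_pos_of_mem_Ioo
  constructor
  · have : 0 ≤ 2 * Real.pi * j / m := by positivity
    linarith [Real.pi_pos]
  · rw [div_lt_iff₀ hm]
    nlinarith [Real.pi_pos]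

lemma Real.cos_two_pi_mul_div_pos_iff {m j : ℕ} (hm : 0 < m) (hj : j ≤ m) :
    0 < Real.cos (2 * Real.pi * j / m) ↔ 4 * j < m ∨ 3 * m < 4 * j := by
  have hmR : (0 : ℝ) < m := by exact_mod_cast hm
  refine ⟨fun hcos => ?_, ?_⟩
  · by_contra! hmid
    have hlo : (m : ℝ) ≤ 4 * j := by exact_mod_cast hmid.1
    have hhi : (4 * j : ℝ) ≤ 3 * m := by exact_mod_cast hmid.2
    refine hcos.not_ge (Real.cos_nonpos_of_pi_div_two_le_of_le ?_ ?_)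
    · rw [le_div_iff₀ hmR]
      nlinarith [Real.pi_pos]
    · rw [div_le_iff₀ hmR]
      nlinarith [Real.pi_pos]
  · rintro (hlt | hgt)
    · exact Real.cos_two_pi_mul_div_pos_of_four_mul_lt hlt
    · have hsymm : Real.cos (2 * Real.pi * j / m) = Real.cos (2 * Real.pi * (m - j : ℕ) / m) := by
        rw [Nat.cast_sub hj, mul_sub, sub_div, mul_div_cancel_right₀ _ hmR.ne', Real.cos_two_pi_sub]
      rw [hsymm]
      exact Real.cos_two_pi_mul_div_pos_of_four_mul_lt (by omega)

lemma card_filter_four_mul_lt_or_lt (d : ℕ) :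
    #{j ∈ range (4 * d + 1) | 4 * j < 4 * d + 1 ∨ 3 * (4 * d + 1) < 4 * j} = 2 * d + 1 := by
  have hsplit : {j ∈ range (4 * d + 1) | 4 * j < 4 * d + 1 ∨ 3 * (4 * d + 1) < 4 * j}
      = range (d + 1) ∪ Ico (3 * d + 1) (4 * d + 1) := by
    ext j
    simp only [mem_filter, mem_range, mem_union, mem_Ico]
    omega
  rw [hsplit, card_union_of_disjoint, card_range, Nat.card_Ico]
  · omega
  · simp only [disjoint_left, mem_range, mem_Ico]
    omega

theorem count_m_eq_one_mod_four (d : ℕ) (m : ℕ) (hm : m = 4 * d + 1)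
    (ω : ℂ) (hω : IsPrimitiveRoot ω m) :
    ((Finset.range m).filter fun j => 0 < (ω ^ j).re).card = 2 * d + 1 ∧
      ((Finset.range m).filter fun j => (ω ^ j).re ≤ 0).card = 2 * d := by
  subst hm
  have hζ := Complex.isPrimitiveRoot_exp (4 * d + 1) (by omega)
  have hpos : #{j ∈ range (4 * d + 1) | 0 < (ω ^ j).re} = 2 * d + 1 := by
    rw [hω.card_filter_range_pow (0 < ·.re), ← hζ.card_filter_range_pow (0 < ·.re),
      ← card_filter_four_mul_lt_or_lt d]
    refine congrArg card (filter_congr fun j hj => ?_)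
    rw [Complex.re_exp_two_pi_I_div_pow_s17,
      Real.cos_two_pi_mul_div_pos_iff (by omega) (mem_range.1 hj).le]
  refine ⟨hpos, ?_⟩
  have htotal := card_filter_add_card_filter_not (s := range (4 * d + 1)) (fun j => 0 < (ω ^ j).re)
  simp only [not_lt, card_range] at htotal
  omega
end

section
/- Let p(z) = z^m + c(z^k + conj(z)^k) - 1 with m, k ∈ ℕ, m > k ≥ 1, gcd(m, k) = 1, m ≡ 1 (mod 4), k even, and c > 0. Then p has at least m zeros for every c > 0: specifically, for each even j ∈ {0,...,2m-1}, the ray of angle jπ/m contains exactly one zero of p, and these even-indexed rays contribute m zeros in total. -/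
open Complex Real


lemma unique_root (m k : ℕ) (hk : 1 ≤ k) (hmk : k < m) (a : ℝ) :
    ∃! r : ℝ, 0 < r ∧ r ^ m + a * r ^ k - 1 = 0 := by
  have hm1 : 1 ≤ m := le_of_lt (lt_of_le_of_lt hk hmk)
  have hex : ∃ r : ℝ, 0 < r ∧ r ^ m + a * r ^ k - 1 = 0 := by
    set f : ℝ → ℝ := fun r => r ^ m + a * r ^ k - 1 with hf
    set R : ℝ := |a| + 2 with hR
    have hR1 : (1:ℝ) ≤ R := by have := abs_nonneg a; linarith
    have hcont : ContinuousOn f (Set.Icc 0 R) := by fun_prop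
    have h0 : f 0 = -1 := by
      simp [hf, zero_pow (by omega : m ≠ 0), zero_pow (by omega : k ≠ 0)]
    have hfR : 1 ≤ f R := by
      have h1 : R ^ (k+1) ≤ R ^ m := pow_le_pow_right₀ hR1 (by omega)
      have h2 : R ^ (k+1) = R ^ k * R := pow_succ R k
      have h3 : (1:ℝ) ≤ R ^ k := one_le_pow₀ hR1
      have h4 : -|a| ≤ a := neg_abs_le a
      have h5 : 0 ≤ (a + |a|) * R ^ k := mul_nonneg (by linarith) (by linarith)
      have : f R = R ^ m + a * R ^ k - 1 := rfl
      nlinarith [h1, h2, h3, h5]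
    have hsub := intermediate_value_Icc (by positivity : (0:ℝ) ≤ R) hcont
    have h0mem : (0:ℝ) ∈ Set.Icc (f 0) (f R) := by
      constructor <;> [linarith [h0]; linarith]
    obtain ⟨r, hrmem, hr0⟩ := hsub h0mem
    refine ⟨r, ?_, hr0⟩
    rcases lt_or_eq_of_le hrmem.1 with h | h
    · exact h
    · exfalso; rw [← h] at hr0; rw [h0] at hr0; norm_num at hr0
  obtain ⟨r, hr⟩ := hex
  refine ⟨r, hr, ?_⟩
  -- uniqueness
  have aux : ∀ s t : ℝ, 0 < s → s ^ m + a * s ^ k - 1 = 0 →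
      0 < t → t ^ m + a * t ^ k - 1 = 0 → s < t → False := by
    intro s t hs hseq ht hteq hst
    set e : ℕ := m - k with he
    have hme : m = e + k := by omega
    have he1 : 1 ≤ e := by omega
    have hs' : (s ^ e + a) * s ^ k = 1 := by
      rw [hme] at hseq; rw [pow_add] at hseq; linarith [hseq]; 
    have ht' : (t ^ e + a) * t ^ k = 1 := by
      rw [hme] at hteq; rw [pow_add] at hteq; linarith [hteq]
    have hsk : (0:ℝ) < s ^ k := by positivity
    have hspos : 0 < s ^ e + a := by
      by_contra h
      push_neg at h
      nlinarith
    have h1 : s ^ e < t ^ e := pow_lt_pow_left₀ hst (le_of_lt hs) (by omega)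
    have h2 : s ^ k < t ^ k := pow_lt_pow_left₀ hst (le_of_lt hs) (by omega)
    have : (s ^ e + a) * s ^ k < (t ^ e + a) * t ^ k :=
      mul_lt_mul'' (by linarith) h2 (le_of_lt hspos) (le_of_lt hsk)
    rw [hs', ht'] at this
    exact lt_irrefl 1 this
  intro y hy
  rcases lt_trichotomy y r with h | h | h
  · exact absurd (aux y r hy.1 hy.2 hr.1 hr.2 h) not_false
  · exact h
  · exact absurd (aux r y hr.1 hr.2 hy.1 hy.2 h) not_false

lemma ray_eval (m k : ℕ) (hm : 0 < m) (c r x : ℝ) (d : ℕ) (hx : x = 2 * d * π / m) :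
    ((r : ℂ) * Complex.exp ((x : ℝ) * Complex.I)) ^ m
      + (c : ℂ) * (((r : ℂ) * Complex.exp ((x : ℝ) * Complex.I)) ^ k
          + ((starRingEnd ℂ) ((r : ℂ) * Complex.exp ((x : ℝ) * Complex.I))) ^ k)
      - 1 = ((r ^ m + 2 * c * Real.cos (k * x) * r ^ k - 1 : ℝ) : ℂ) := by
  have hconj : (starRingEnd ℂ) ((r : ℂ) * Complex.exp ((x : ℝ) * Complex.I))
      = (r : ℂ) * Complex.exp (-((x : ℝ) * Complex.I)) := by
    rw [map_mul, Complex.conj_ofReal, ← Complex.exp_conj]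
    congr 1
    simp [Complex.conj_I]
  have hexpm : Complex.exp ((x : ℝ) * Complex.I) ^ m = 1 := by
    rw [← Complex.exp_nat_mul]
    have h : (m : ℂ) * ((x : ℝ) * Complex.I) = (d : ℤ) * (2 * π * Complex.I) := by
      rw [hx]
      push_cast
      have hm0 : (m : ℂ) ≠ 0 := by exact_mod_cast Nat.cast_ne_zero.mpr hm.ne'
      field_simp
    rw [h, Complex.exp_int_mul_two_pi_mul_I]
  have hsum : Complex.exp ((k:ℂ) * ((x:ℝ) * Complex.I))
      + Complex.exp ((k:ℂ) * (-((x:ℝ) * Complex.I)))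
      = 2 * Complex.cos ((k:ℂ) * (x:ℝ)) := by
    have h := Complex.two_cos ((k:ℂ) * (x:ℝ))
    rw [show (k:ℂ) * (x:ℝ) * Complex.I = (k:ℂ) * ((x:ℝ) * Complex.I) from by ring,
        show -((k:ℂ) * (x:ℝ)) * Complex.I = (k:ℂ) * (-((x:ℝ) * Complex.I)) from by ring] at h
    exact h.symm
  rw [hconj, mul_pow, mul_pow, mul_pow, hexpm, ← Complex.exp_nat_mul, ← Complex.exp_nat_mul]
  simp only [Complex.ofReal_sub, Complex.ofReal_add, Complex.ofReal_mul, Complex.ofReal_pow,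
    Complex.ofReal_one, Complex.ofReal_ofNat, Complex.ofReal_cos, Complex.ofReal_natCast]
  linear_combination (c : ℂ) * (r : ℂ) ^ k * hsum

lemma ray_inj (m : ℕ) (hm : 0 < m) (d1 d2 : ℕ) (hd1 : d1 < m) (hd2 : d2 < m)
    (r1 r2 : ℝ) (h1 : 0 < r1) (h2 : 0 < r2)
    (heq : (r1 : ℂ) * Complex.exp ((2 * d1 * π / m : ℝ) * Complex.I)
         = (r2 : ℂ) * Complex.exp ((2 * d2 * π / m : ℝ) * Complex.I)) : d1 = d2 := by
  set x1 : ℝ := 2 * d1 * π / m with hx1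
  set x2 : ℝ := 2 * d2 * π / m with hx2
  have habs : r1 = r2 := by
    have := congrArg (‖·‖) heq
    simpa [norm_mul, Complex.norm_real, Real.norm_eq_abs, Complex.norm_exp_ofReal_mul_I,
      abs_of_pos h1, abs_of_pos h2] using this
  rw [habs] at heq
  have hr2 : (r2 : ℂ) ≠ 0 := by exact_mod_cast h2.ne'
  have hexp : Complex.exp ((x1 : ℝ) * Complex.I) = Complex.exp ((x2 : ℝ) * Complex.I) :=
    mul_left_cancel₀ hr2 heq
  rw [Complex.exp_eq_exp_iff_exists_int] at hexp
  obtain ⟨n, hn⟩ := hexp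
  have him := congrArg Complex.im hn
  simp [Complex.mul_I_im, Complex.add_im, Complex.mul_im] at him
  -- him : x1 = x2 + n * (2 * π)   (roughly)
  have hπ : (0:ℝ) < π := Real.pi_pos
  have hm0 : (m : ℝ) ≠ 0 := by exact_mod_cast hm.ne'
  have hkey : (d1 : ℝ) = d2 + n * m := by
    rw [hx1, hx2] at him
    field_simp at him
    nlinarith [him, hπ]
  have hkeyZ : (d1 : ℤ) = d2 + n * m := by exact_mod_cast hkey
  have hb1 : (d1 : ℤ) < m := by exact_mod_cast hd1
  have hb2 : (d2 : ℤ) < m := by exact_mod_cast hd2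
  have hmz : (0:ℤ) < m := by exact_mod_cast hm
  have hn0 : n = 0 := by
    rcases lt_trichotomy n 0 with h | h | h
    · exfalso
      have : n * (m:ℤ) ≤ -1 * m :=
        mul_le_mul_of_nonneg_right (by omega) (le_of_lt hmz)
      have hd1nn : (0:ℤ) ≤ (d1:ℤ) := Int.natCast_nonneg d1
      have hd2nn : (0:ℤ) ≤ (d2:ℤ) := Int.natCast_nonneg d2
      linarith
    · exact h
    · exfalso
      have : 1 * (m:ℤ) ≤ n * m :=
        mul_le_mul_of_nonneg_right (by omega) (le_of_lt hmz)
      have hd1nn : (0:ℤ) ≤ (d1:ℤ) := Int.natCast_nonneg d1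
      have hd2nn : (0:ℤ) ≤ (d2:ℤ) := Int.natCast_nonneg d2
      linarith
  rw [hn0] at hkeyZ
  simp at hkeyZ
  exact_mod_cast hkeyZ

theorem at_least_m_zeros (m k : ℕ) (hk : 1 ≤ k) (hmk : k < m) (hm : m % 4 = 1)
    (hkeven : Even k) (hgcd : Nat.gcd m k = 1) (c : ℝ) (hc : 0 < c) :
    (∀ j : ℕ, j < 2 * m → j % 2 = 0 →
      ∃! r : ℝ, 0 < r ∧
        ((r : ℂ) * Complex.exp ((j * Real.pi / m : ℝ) * Complex.I)) ^ m
          + (c : ℂ) * (((r : ℂ) * Complex.exp ((j * Real.pi / m : ℝ) * Complex.I)) ^ k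
              + ((starRingEnd ℂ) ((r : ℂ) * Complex.exp ((j * Real.pi / m : ℝ) * Complex.I))) ^ k)
          - 1 = 0) ∧
    ∃ S : Finset ℂ, S.card = m ∧ ∀ z ∈ S,
      z ^ m + (c : ℂ) * (z ^ k + (starRingEnd ℂ) z ^ k) - 1 = 0 := by
  have hm0 : 0 < m := by omega
  constructor
  · intro j hj hj0
    obtain ⟨d, hjd⟩ : ∃ d, j = 2 * d := ⟨j / 2, by omega⟩
    have hx : (j * Real.pi / m : ℝ) = 2 * d * π / m := by
      rw [hjd]; push_cast; ring
    obtain ⟨r, hr, huniq⟩ :=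
      unique_root m k hk hmk (2 * c * Real.cos (k * (j * Real.pi / m : ℝ)))
    refine ⟨r, ⟨hr.1, ?_⟩, fun y hy => huniq y ⟨hy.1, ?_⟩⟩
    · rw [ray_eval m k hm0 c r _ d hx, Complex.ofReal_eq_zero]
      linarith [hr.2]
    · have := hy.2
      rw [ray_eval m k hm0 c y _ d hx, Complex.ofReal_eq_zero] at this
      linarith [this]
  · have key := fun d : ℕ =>
      (unique_root m k hk hmk (2 * c * Real.cos (k * (2 * d * π / m : ℝ)))).exists
    choose rr hpos hroot using key
    refine ⟨(Finset.range m).image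
      (fun d => (rr d : ℂ) * Complex.exp ((2 * d * π / m : ℝ) * Complex.I)), ?_, ?_⟩
    · rw [Finset.card_image_of_injOn, Finset.card_range]
      intro d1 hd1 d2 hd2 h
      simp only [Finset.coe_range, Set.mem_Iio] at hd1 hd2
      exact ray_inj m hm0 d1 d2 hd1 hd2 _ _ (hpos d1) (hpos d2) h
    · intro z hz
      simp only [Finset.mem_image, Finset.mem_range] at hz
      obtain ⟨d, hd, rfl⟩ := hz
      rw [ray_eval m k hm0 c (rr d) _ d rfl, Complex.ofReal_eq_zero]
      linarith [hroot d]
end
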